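/- arXiv:2510.03304 — 5 statements merged into one kernel-verified Lean document; each statement's English description precedes it below -/
import Mathlib

section
/- Let α ∈ (0,1) and let b, c be real numbers, and consider the quadratic polynomial p(λ) = λ² − bλ + c. If any one of the following three conditions holds: (i) c > 4^α and b < 2^{−α}·c + 2^α; (ii) 0 < c ≤ 4^α and b < 2·√c·cos(α·arccos(c^{1/(2α)}/2)); (iii) c < 0 and b > 2^{−α}·c + 2^α; then both complex roots of p belong to the region S_α. -/
/-- The stability region `S_α`: the set of nonzero complex numbers `z` with
`|arg z| > απ/2` or `|z| > (2 cos((arg z)/α))^α`. -/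
noncomputable def stabilityRegion (α : ℝ) : Set ℂ :=
  {z : ℂ | z ≠ 0 ∧ (|z.arg| > α * Real.pi / 2 ∨
    ‖z‖ > (2 * Real.cos (z.arg / α)) ^ α)}

set_option maxHeartbeats 1000000 in
/-- If one of conditions (i)–(iii) holds, then both complex roots of
`p(λ) = λ² − bλ + c` belong to the region `S_α`. -/
theorem roots_mem_stabilityRegion (α b c : ℝ) (hα : α ∈ Set.Ioo (0 : ℝ) 1)
    (h : (c > (4 : ℝ) ^ α ∧ b < (2 : ℝ) ^ (-α) * c + (2 : ℝ) ^ α) ∨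
      (0 < c ∧ c ≤ (4 : ℝ) ^ α ∧
        b < 2 * Real.sqrt c * Real.cos (α * Real.arccos (c ^ (1 / (2 * α)) / 2))) ∨
      (c < 0 ∧ b > (2 : ℝ) ^ (-α) * c + (2 : ℝ) ^ α)) :
    ∀ z : ℂ, z ^ 2 - (b : ℂ) * z + (c : ℂ) = 0 → z ∈ stabilityRegion α := by
  obtain ⟨hα0, hα1⟩ := hα
  intro z hz
  obtain ⟨A, hA⟩ : ∃ A : ℝ, (2:ℝ) ^ α = A := ⟨_, rfl⟩
  have hApos : (0:ℝ) < A := hA ▸ Real.rpow_pos_of_pos (by norm_num) α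
  have h4A : (4:ℝ) ^ α = A * A := by
    rw [← hA, show (4:ℝ) = 2*2 by norm_num, Real.mul_rpow (by norm_num) (by norm_num)]
  have hinv : (2:ℝ) ^ (-α) = A⁻¹ := by rw [← hA, Real.rpow_neg (by norm_num)]
  have hc0 : c ≠ 0 := by
    rcases h with ⟨h1,_⟩|⟨h1,_⟩|⟨h1,_⟩ <;> nlinarith [mul_pos hApos hApos]
  have hz0 : z ≠ 0 := by
    intro hzz
    rw [hzz] at hz
    simp at hz
    exact hc0 hz
  refine ⟨hz0, ?_⟩
  have h1 := congrArg Complex.re hz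
  have h2 := congrArg Complex.im hz
  simp [pow_two, Complex.mul_re, Complex.mul_im] at h1 h2
  set x := z.re with hx
  set y := z.im with hy
  have hre : x^2 - y^2 - b*x + c = 0 := by nlinarith [h1]
  have him : y * (2*x - b) = 0 := by nlinarith [h2]
  rcases eq_or_ne y 0 with hy0 | hy0
  · -- real root
    have hzx : z = (x:ℂ) := Complex.ext rfl (by simpa using hy0)
    have hrx : x^2 - b*x + c = 0 := by nlinarith [hre]
    have hx0 : x ≠ 0 := by
      intro hxx
      rw [hxx] at hrx
      apply hc0
      nlinarith [hrx]
    rcases hx0.lt_or_gt with hxneg | hxpos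
    · left
      rw [hzx, Complex.arg_ofReal_of_neg hxneg, abs_of_pos Real.pi_pos]
      nlinarith [Real.pi_pos]
    · right
      have harg : z.arg = 0 := by
        rw [hzx]; exact Complex.arg_ofReal_of_nonneg hxpos.le
      rw [harg, zero_div, Real.cos_zero, mul_one, hzx, Complex.norm_real, Real.norm_eq_abs,
        abs_of_pos hxpos, hA]
      by_contra hcon
      push_neg at hcon
      have e1 : b*x = x^2 + c := by linarith [hrx]
      rcases h with ⟨hc1, hb⟩ | ⟨hc1, hc2, hb⟩ | ⟨hc1, hb⟩
      · rw [hinv] at hb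
        have hbA : b * A < c + A * A := by
          have h' := mul_lt_mul_of_pos_right hb hApos
          rw [add_mul, inv_mul_eq_div, div_mul_eq_mul_div, mul_div_assoc,
            div_self hApos.ne', mul_one] at h'
          rw [hA] at h'
          linarith [h']
        have hAx : A*x ≤ A*A := mul_le_mul_of_nonneg_left hcon hApos.le
        have h5 : A*x < c := by nlinarith [hAx]
        have key : (A - x) * (c - A*x) ≥ 0 :=
          mul_nonneg (by linarith) (by linarith)
        have e2 := mul_lt_mul_of_pos_right hbA hxpos
        have e3 : b*x*A = (x^2+c)*A := by rw [e1]
        nlinarith [key, e2, e3]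
      · have hcos := Real.cos_le_one (α * Real.arccos (c ^ (1 / (2*α)) / 2))
        have hs := Real.sqrt_nonneg c
        have hsq : Real.sqrt c ^ 2 = c := Real.sq_sqrt hc1.le
        have hb2 : b < 2*Real.sqrt c := by
          nlinarith [mul_nonneg hs (sub_nonneg.2 hcos)]
        have e2 := mul_lt_mul_of_pos_right hb2 hxpos
        nlinarith [e2, sq_nonneg (x - Real.sqrt c), hsq, e1]
      · rw [hinv] at hb
        have hbA : b * A > c + A * A := by
          have h' := mul_lt_mul_of_pos_right hb hApos
          rw [add_mul, inv_mul_eq_div, div_mul_eq_mul_div, mul_div_assoc,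
            div_self hApos.ne', mul_one] at h'
          rw [hA] at h'
          linarith [h']
        have key : (A - x) * (A*x - c) ≥ 0 :=
          mul_nonneg (by linarith) (by nlinarith [mul_pos hApos hxpos])
        have e2 := mul_lt_mul_of_pos_right hbA hxpos
        have e3 : b*x*A = (x^2+c)*A := by rw [e1]
        nlinarith [key, e2, e3]
  · -- complex root
    have hxb : 2*x = b := by
      rcases mul_eq_zero.1 him with h' | h'
      · exact absurd h' hy0
      · linarith
    have hbx2 : b*x = 2*(x^2) := by rw [← hxb]; ring
    have hcxy : c = x^2 + y^2 := by linarith [hre, hbx2]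
    have hcpos : 0 < c := by
      rw [hcxy]; positivity
    have habs : ‖z‖ = Real.sqrt c := by
      rw [Complex.norm_def]
      congr 1
      rw [Complex.normSq_apply]
      nlinarith [hcxy]
    have hsqpos : 0 < Real.sqrt c := Real.sqrt_pos.2 hcpos
    rcases h with ⟨hc1, hb⟩ | ⟨hc1, hc2, hb⟩ | ⟨hc1, hb⟩
    · -- (i)
      right
      have h1' : A < Real.sqrt c := by
        rw [Real.lt_sqrt hApos.le]
        nlinarith [h4A]
      have h2' : (2 * Real.cos (z.arg / α)) ^ α ≤ A := by
        calc (2 * Real.cos (z.arg / α)) ^ α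
            ≤ |(2 * Real.cos (z.arg / α)) ^ α| := le_abs_self _
          _ ≤ |2 * Real.cos (z.arg / α)| ^ α := Real.abs_rpow_le_abs_rpow _ _
          _ ≤ (2:ℝ) ^ α := by
              apply Real.rpow_le_rpow (abs_nonneg _) _ hα0.le
              rw [abs_mul, abs_two]
              nlinarith [Real.abs_cos_le_one (z.arg / α)]
          _ = A := hA
      rw [habs]; linarith
    · -- (ii)
      set ψ := Real.arccos (c ^ (1 / (2*α)) / 2) with hψ
      have hcr_pos : 0 < c ^ (1 / (2*α)) := Real.rpow_pos_of_pos hc1 _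
      have hcr_le : c ^ (1 / (2*α)) ≤ 2 := by
        calc c ^ (1 / (2*α)) ≤ ((4:ℝ)^α) ^ (1 / (2*α)) :=
              Real.rpow_le_rpow hc1.le hc2 (by positivity)
          _ = (4:ℝ) ^ (α * (1 / (2*α))) := (Real.rpow_mul (by norm_num) _ _).symm
          _ = (4:ℝ) ^ (1/2 : ℝ) := by
              congr 1; field_simp
          _ = 2 := by
              rw [← Real.sqrt_eq_rpow, show (4:ℝ) = 2^2 by norm_num,
                Real.sqrt_sq (by norm_num)]
      have hcosψ : Real.cos ψ = c ^ (1 / (2*α)) / 2 := by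
        rw [hψ]; exact Real.cos_arccos (by linarith) (by linarith)
      have hψ_nonneg : 0 ≤ ψ := Real.arccos_nonneg _
      have hψ_le : ψ ≤ Real.pi / 2 := Real.arccos_le_pi_div_two.2 (by positivity)
      have hcosarg : Real.cos z.arg = b / (2 * Real.sqrt c) := by
        rw [Complex.cos_arg hz0, habs, ← hx, ← hxb]
        field_simp
      have hlt : Real.cos z.arg < Real.cos (α * ψ) := by
        rw [hcosarg, div_lt_iff₀ (by positivity)]
        calc b < 2 * Real.sqrt c * Real.cos (α * ψ) := hb
          _ = Real.cos (α * ψ) * (2 * Real.sqrt c) := by ring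
      set φ := |z.arg| with hφ
      have hφ_nonneg : 0 ≤ φ := abs_nonneg _
      have hφ_le : φ ≤ Real.pi := Complex.abs_arg_le_pi z
      have hcosφ : Real.cos φ = Real.cos z.arg := Real.cos_abs _
      have hαψ_nonneg : 0 ≤ α * ψ := by positivity
      have hαψ_lt : α * ψ < φ := by
        by_contra hcon
        push_neg at hcon
        rcases hcon.lt_or_eq with h' | h'
        · exact absurd (Real.cos_lt_cos_of_nonneg_of_le_pi hφ_nonneg
            (by nlinarith [Real.pi_pos]) h') (by rw [hcosφ]; linarith)
        · rw [← h', hcosφ] at hlt; linarith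
      rcases le_or_gt φ (α * Real.pi / 2) with hφ2 | hφ2
      · right
        have hφα_nonneg : 0 ≤ φ / α := div_nonneg hφ_nonneg hα0.le
        have hφα_le : φ / α ≤ Real.pi / 2 := by
          rw [div_le_iff₀ hα0]; nlinarith
        have hψ_lt : ψ < φ / α := by
          rw [lt_div_iff₀ hα0]; nlinarith
        have hcoslt : Real.cos (φ / α) < Real.cos ψ :=
          Real.cos_lt_cos_of_nonneg_of_le_pi hψ_nonneg
            (by nlinarith [Real.pi_pos]) hψ_lt
        have hcos_nonneg : 0 ≤ Real.cos (φ / α) :=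
          Real.cos_nonneg_of_mem_Icc ⟨by linarith [Real.pi_pos], hφα_le⟩
        have hcoseq : Real.cos (z.arg / α) = Real.cos (φ / α) := by
          rw [← Real.cos_abs (z.arg / α), abs_div, abs_of_pos hα0, ← hφ]
        rw [habs, hcoseq]
        calc (2 * Real.cos (φ / α)) ^ α < (c ^ (1 / (2*α))) ^ α := by
              apply Real.rpow_lt_rpow (by linarith) _ hα0
              rw [hcosψ] at hcoslt; linarith
          _ = c ^ ((1 / (2*α)) * α) := (Real.rpow_mul hc1.le _ _).symm
          _ = c ^ (1/2 : ℝ) := by congr 1; field_simp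
          _ = Real.sqrt c := (Real.sqrt_eq_rpow c).symm
      · left; exact hφ2
    · linarith
end

section
/- Let ϑ, k, η, γ₁, γ₂ be arbitrary real numbers and let J be the 6×6 real matrix with rows (ϑ, 1, −kγ₁, 0, 0, 0), (−η, kγ₂, 0, −kγ₂, 0, 0), (−kγ₁, 0, ϑ, 1, 0, 0), (0, −kγ₂, −η, kγ₂, 0, 0), (1, 0, −1, 0, 0, 0), (0, 1, 0, −1, 0, 0). Then the characteristic polynomial of J factors as det(λI − J) = λ² · (λ² − (ϑ + kγ₁ + 2kγ₂)·λ + (2kγ₂·(ϑ + kγ₁) + η)) · (λ² − (ϑ − kγ₁)·λ + η). In particular, the Jacobian matrix of the FDMCRN system at its equilibrium E* = (σ, σ − a/(σ²+1), σ, σ − a/(σ²+1), γ₁, γ₂) has this form, and its nonzero eigenvalues are exactly the roots of the two quadratic factors. -/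
open Polynomial

set_option maxRecDepth 10000 in
set_option maxHeartbeats 1000000 in
/-- The characteristic polynomial of the Jacobian matrix of the FDMCRN system at its
line equilibrium factors as
`λ² · (λ² − (ϑ + kγ₁ + 2kγ₂)λ + (2kγ₂(ϑ + kγ₁) + η)) · (λ² − (ϑ − kγ₁)λ + η)`;
in particular the nonzero eigenvalues are exactly the roots of the two quadratic
factors. -/
theorem fdmcrn_jacobian_charpoly (ϑ k η γ₁ γ₂ : ℝ)
    (J : Matrix (Fin 6) (Fin 6) ℝ)
    (hJ : J = !![ϑ, 1, -(k * γ₁), 0, 0, 0;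
                 -η, k * γ₂, 0, -(k * γ₂), 0, 0;
                 -(k * γ₁), 0, ϑ, 1, 0, 0;
                 0, -(k * γ₂), -η, k * γ₂, 0, 0;
                 1, 0, -1, 0, 0, 0;
                 0, 1, 0, -1, 0, 0]) :
    J.charpoly =
      X ^ 2 *
        (X ^ 2 - C (ϑ + k * γ₁ + 2 * k * γ₂) * X + C (2 * k * γ₂ * (ϑ + k * γ₁) + η)) *
        (X ^ 2 - C (ϑ - k * γ₁) * X + C η) ∧
    ∀ z : ℂ, z ≠ 0 →
      (((J.map (Complex.ofReal)).charpoly).IsRoot z ↔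
        (z ^ 2 - ((ϑ : ℂ) + k * γ₁ + 2 * k * γ₂) * z +
          (2 * (k : ℂ) * γ₂ * ((ϑ : ℂ) + k * γ₁) + (η : ℂ)) = 0 ∨
         z ^ 2 - ((ϑ : ℂ) - k * γ₁) * z + (η : ℂ) = 0)) := by
  have hchar : J.charpoly =
      X ^ 2 *
        (X ^ 2 - C (ϑ + k * γ₁ + 2 * k * γ₂) * X + C (2 * k * γ₂ * (ϑ + k * γ₁) + η)) *
        (X ^ 2 - C (ϑ - k * γ₁) * X + C η) := by
    have hre : J = Matrix.reindex finSumFinEquiv finSumFinEquiv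
        (Matrix.fromBlocks
          (!![ϑ, 1, -(k * γ₁), 0; -η, k * γ₂, 0, -(k * γ₂);
              -(k * γ₁), 0, ϑ, 1; 0, -(k * γ₂), -η, k * γ₂] : Matrix (Fin 4) (Fin 4) ℝ)
          0
          (!![1, 0, -1, 0; 0, 1, 0, -1] : Matrix (Fin 2) (Fin 4) ℝ)
          (0 : Matrix (Fin 2) (Fin 2) ℝ)) := by
      subst hJ
      ext i j
      fin_cases i <;> fin_cases j <;>
        simp [Matrix.reindex_apply, Matrix.fromBlocks, finSumFinEquiv, Fin.addCases] <;> rfl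
    rw [hre, Matrix.charpoly_reindex, Matrix.charpoly_fromBlocks_zero₁₂]
    have h2 : (0 : Matrix (Fin 2) (Fin 2) ℝ).charpoly = X ^ 2 := by
      rw [Matrix.charpoly]
      simp [Matrix.det_fin_two, Matrix.charmatrix_apply]
    have h4 : (!![ϑ, 1, -(k * γ₁), 0; -η, k * γ₂, 0, -(k * γ₂);
              -(k * γ₁), 0, ϑ, 1; 0, -(k * γ₂), -η, k * γ₂] : Matrix (Fin 4) (Fin 4) ℝ).charpoly
        = (X ^ 2 - C (ϑ + k * γ₁ + 2 * k * γ₂) * X + C (2 * k * γ₂ * (ϑ + k * γ₁) + η)) *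
          (X ^ 2 - C (ϑ - k * γ₁) * X + C η) := by
      rw [Matrix.charpoly]
      have hm : Matrix.charmatrix (!![ϑ, 1, -(k * γ₁), 0; -η, k * γ₂, 0, -(k * γ₂);
              -(k * γ₁), 0, ϑ, 1; 0, -(k * γ₂), -η, k * γ₂] : Matrix (Fin 4) (Fin 4) ℝ)
          = !![X - C ϑ, -1, C (k*γ₁), 0;
               C η, X - C (k*γ₂), 0, C (k*γ₂);
               C (k*γ₁), 0, X - C ϑ, -1;
               0, C (k*γ₂), C η, X - C (k*γ₂)] := by
        ext i j
        fin_cases i <;> fin_cases j <;> simp [Matrix.charmatrix_apply]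
      rw [hm]
      simp [Matrix.det_succ_row_zero, Fin.sum_univ_succ, Matrix.det_fin_three, Fin.succAbove,
        map_ofNat]
      ring
    rw [h2, h4]; ring
  refine ⟨hchar, ?_⟩
  intro z hz
  have hmap : (J.map Complex.ofReal).charpoly =
      X ^ 2 *
        (X ^ 2 - C ((ϑ : ℂ) + k * γ₁ + 2 * k * γ₂) * X +
          C (2 * (k : ℂ) * γ₂ * ((ϑ : ℂ) + k * γ₁) + (η : ℂ))) *
        (X ^ 2 - C ((ϑ : ℂ) - k * γ₁) * X + C (η : ℂ)) := by
    have : J.map Complex.ofReal = J.map (Complex.ofRealHom : ℝ →+* ℂ) := rfl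
    rw [this, Matrix.charpoly_map, hchar]
    simp only [Polynomial.map_mul, Polynomial.map_pow, Polynomial.map_add, Polynomial.map_sub,
      Polynomial.map_X, Polynomial.map_C, Complex.ofRealHom_eq_coe]
    push_cast
    ring
  rw [hmap]
  simp only [IsRoot.def, eval_mul, eval_pow, eval_add, eval_sub, eval_X, eval_C, mul_eq_zero,
    pow_eq_zero_iff, hz, false_or, two_ne_zero, ne_eq, not_false_eq_true]
end

section
/- For all real numbers k, η, ϑ, γ₁, γ₂, the following polynomial identity holds in ℝ[λ]: λ⁴ − (2ϑ + 2γ₂k)·λ³ + (−γ₁²k² + 4γ₂kϑ + ϑ² + η)·λ² − (−2γ₂γ₁²k³ + ηγ₁k + 2γ₂kϑ² + 2γ₂ηk + ηϑ)·λ + 2·(γ₁γ₂ηk² + γ₂ηϑk) = (λ² + (−ϑ − γ₁k − 2γ₂k)·λ + (2γ₁γ₂k² + 2γ₂ϑk)) · (λ² + (γ₁k − ϑ)·λ + η); that is, the quartic factor p₁(λ) of the characteristic polynomial, with the coefficients a₀, a₁, a₂, a₃ of Table 1, factors into the two quadratics p₂(λ) = λ² + b₁λ + b₀ and p₃(λ)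 = λ² + c₁λ + c₀ with b₀ = 2γ₁γ₂k² + 2γ₂ϑk, b₁ = −ϑ − γ₁k − 2γ₂k, c₀ = η, c₁ = γ₁k − ϑ. -/
open Polynomial

/-- The quartic factor `p₁(λ)` of the characteristic polynomial of the FDMCRN Jacobian
(with the coefficients of Table 1) factors into the two quadratics
`p₂(λ) = λ² + b₁λ + b₀` and `p₃(λ) = λ² + c₁λ + c₀` with
`b₀ = 2γ₁γ₂k² + 2γ₂ϑk`, `b₁ = −ϑ − γ₁k − 2γ₂k`, `c₀ = η`, `c₁ = γ₁k − ϑ`. -/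
theorem fdmcrn_quartic_factorization (k η ϑ γ₁ γ₂ : ℝ) :
    (X ^ 4 : ℝ[X]) - C (2 * ϑ + 2 * γ₂ * k) * X ^ 3 +
        C (-(γ₁ ^ 2) * k ^ 2 + 4 * γ₂ * k * ϑ + ϑ ^ 2 + η) * X ^ 2 -
        C (-2 * γ₂ * γ₁ ^ 2 * k ^ 3 + η * γ₁ * k + 2 * γ₂ * k * ϑ ^ 2 +
            2 * γ₂ * η * k + η * ϑ) * X +
        C (2 * (γ₁ * γ₂ * η * k ^ 2 + γ₂ * η * ϑ * k)) =
      (X ^ 2 + C (-ϑ - γ₁ * k - 2 * γ₂ * k) * X + C (2 * γ₁ * γ₂ * k ^ 2 + 2 * γ₂ * ϑ * k)) *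
        (X ^ 2 + C (γ₁ * k - ϑ) * X + C η) := by
  simp only [map_mul, map_add, map_sub, map_neg, map_pow, map_ofNat, map_one]
  ring
end

section
/- Let a = 3, k = 1/20, η = 1/1000, σ = −3/2, γ₁ = −1, γ₂ = −130, and let ϑ = (kγ₁ − 2aσ)/(σ²+1)² − 1. Let J be the 6×6 real matrix with rows (ϑ, 1, −kγ₁, 0, 0, 0), (−η, kγ₂, 0, −kγ₂, 0, 0), (−kγ₁, 0, ϑ, 1, 0, 0), (0, −kγ₂, −η, kγ₂, 0, 0), (1, 0, −1, 0, 0, 0), (0, 1, 0, −1, 0, 0). Then 0 is an eigenvalue of J of algebraic multiplicity exactly 2, and every nonzero complex eigenvalue of J is a negative real number (Case 1 of Example I). -/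
open Polynomial

set_option maxHeartbeats 4000000 in
set_option maxRecDepth 40000 in
lemma quad_root_neg (b c : ℝ) (hb : 0 < b) (hc : 0 < c) (hd : 4 * c < b ^ 2)
    (z : ℂ) (hz : z ^ 2 + (b : ℂ) * z + (c : ℂ) = 0) : z.im = 0 ∧ z.re < 0 := by
  have h1 : (z ^ 2 + (b : ℂ) * z + (c : ℂ)).re = 0 := by rw [hz]; simp
  have h2 : (z ^ 2 + (b : ℂ) * z + (c : ℂ)).im = 0 := by rw [hz]; simp
  simp only [pow_two, Complex.add_re, Complex.add_im, Complex.mul_re, Complex.mul_im,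
    Complex.ofReal_re, Complex.ofReal_im] at h1 h2
  have hy : z.im = 0 := by
    by_contra hy
    have h3 : 2 * z.re + b = 0 := by
      have : z.im * (2 * z.re + b) = 0 := by ring_nf; ring_nf at h2; linarith
      rcases mul_eq_zero.mp this with h | h
      · exact absurd h hy
      · exact h
    nlinarith [sq_nonneg z.im]
  refine ⟨hy, ?_⟩
  rw [hy] at h1
  nlinarith [sq_nonneg z.re]

/-- Case 1 of Example I: with `a = 3`, `k = 1/20`, `η = 1/1000`, `σ = −3/2`,
`γ₁ = −1`, `γ₂ = −130`, the Jacobian `J` of the FDMCRN system at the line equilibrium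
has `0` as an eigenvalue of algebraic multiplicity exactly `2`, and every nonzero
complex eigenvalue of `J` is a negative real number. -/
theorem fdmcrn_example1_case1 (a k η σ γ₁ γ₂ ϑ : ℝ)
    (ha : a = 3) (hk : k = 1 / 20) (hη : η = 1 / 1000) (hσ : σ = -(3 / 2))
    (hγ₁ : γ₁ = -1) (hγ₂ : γ₂ = -130)
    (hϑ : ϑ = (k * γ₁ - 2 * a * σ) / (σ ^ 2 + 1) ^ 2 - 1)
    (J : Matrix (Fin 6) (Fin 6) ℝ)
    (hJ : J = !![ϑ, 1, -(k * γ₁), 0, 0, 0;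
                 -η, k * γ₂, 0, -(k * γ₂), 0, 0;
                 -(k * γ₁), 0, ϑ, 1, 0, 0;
                 0, -(k * γ₂), -η, k * γ₂, 0, 0;
                 1, 0, -1, 0, 0, 0;
                 0, 1, 0, -1, 0, 0]) :
    ((J.map (Complex.ofReal)).charpoly).rootMultiplicity 0 = 2 ∧
    ∀ z : ℂ, ((J.map (Complex.ofReal)).charpoly).IsRoot z → z ≠ 0 →
      z.im = 0 ∧ z.re < 0 := by
  subst ha hk hη hσ hγ₁ hγ₂ hϑ hJ
  set J : Matrix (Fin 6) (Fin 6) ℝ := !![_, 1, _, 0, 0, 0;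
                 _, _, 0, _, 0, 0;
                 _, 0, _, 1, 0, 0;
                 0, _, _, _, 0, 0;
                 1, 0, -1, 0, 0, 0;
                 0, 1, 0, -1, 0, 0] with hJ
  have hch : J.charpoly = X ^ 2 * (X ^ 2 + C (347/3380 : ℝ) * X + C (1/1000 : ℝ)) *
      (X ^ 2 + C (8925/676 : ℝ) * X + C (445419/169000 : ℝ)) := by
    apply Polynomial.funext
    intro x
    rw [Matrix.charpoly, ← coe_evalRingHom, RingHom.map_det]
    have hN : (evalRingHom x).mapMatrix J.charmatrix =
        !![x - (-129/845), -1, -(1/20), 0, 0, 0;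
           1/1000, x - (-13/2), 0, -(13/2), 0, 0;
           -(1/20), 0, x - (-129/845), -1, 0, 0;
           0, -(13/2), 1/1000, x - (-13/2), 0, 0;
           -1, 0, 1, 0, x, 0;
           0, -1, 0, 1, 0, x] := by
      rw [hJ]
      ext i j
      fin_cases i <;> fin_cases j <;>
        simp [Matrix.charmatrix_apply, Matrix.diagonal_apply, Fin.ext_iff,
          show ((3:Fin 6):ℕ) = 3 from rfl, show ((4:Fin 6):ℕ) = 4 from rfl,
          show ((5:Fin 6):ℕ) = 5 from rfl,
          show (5:Fin 6) = Fin.succ 4 from rfl, show (4:Fin 6) = Fin.succ 3 from rfl,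
          show (3:Fin 6) = Fin.succ 2 from rfl, show (4:Fin 5) = Fin.succ 3 from rfl,
          show (3:Fin 5) = Fin.succ 2 from rfl, show (3:Fin 4) = Fin.succ 2 from rfl,
          Matrix.cons_val_succ, Matrix.vecHead, Matrix.vecTail] <;>
        norm_num
    rw [hN]
    have h : (!![x - (-129/845), -1, -(1/20), 0, 0, 0;
                  1/1000, x - (-13/2), 0, -(13/2), 0, 0;
                  -(1/20), 0, x - (-129/845), -1, 0, 0;
                  0, -(13/2), 1/1000, x - (-13/2), 0, 0;
                  -1, 0, 1, 0, x, 0;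
                  0, -1, 0, 1, 0, x] : Matrix (Fin 6) (Fin 6) ℝ) =
        Matrix.reindex finSumFinEquiv finSumFinEquiv
          (Matrix.fromBlocks
            !![x - (-129/845), -1, -(1/20), 0;
               1/1000, x - (-13/2), 0, -(13/2);
               -(1/20), 0, x - (-129/845), -1;
               0, -(13/2), 1/1000, x - (-13/2)] 0
            !![-1, 0, 1, 0; 0, -1, 0, 1] !![x, 0; 0, x]) := by
      ext i j
      fin_cases i <;> fin_cases j <;> rfl
    rw [h, Matrix.det_reindex_self, Matrix.det_fromBlocks_zero₁₂, Matrix.det_fin_two]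
    simp only [Matrix.det_succ_row_zero, Matrix.submatrix_apply, Matrix.submatrix_submatrix,
      Matrix.det_unique, Fin.default_eq_zero, Function.comp_apply, Fin.sum_univ_succ,
      Finset.sum_singleton, Fin.zero_succAbove, Fin.succ_succAbove_zero, Fin.succ_succAbove_succ,
      Fin.succ_zero_eq_one, Fin.succ_one_eq_two, Fin.val_zero, Fin.val_succ, Fin.val_eq_zero,
      Finset.univ_unique, Matrix.cons_val', Matrix.cons_val_zero, Matrix.cons_val_one,
      Matrix.head_cons, Matrix.head_fin_const, Matrix.cons_val_fin_one, Matrix.cons_val_succ,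
      eval_mul, eval_add, eval_pow, eval_X, eval_C]
    simp [Fin.succAbove, Fin.lt_def, Fin.ext_iff]
    norm_num
    ring
  have hmap : J.map Complex.ofReal = J.map (Complex.ofRealHom : ℝ →+* ℂ) := rfl
  have hmc : (J.map Complex.ofReal).charpoly =
      X ^ 2 * (X ^ 2 + C ((347/3380 : ℝ) : ℂ) * X + C ((1/1000 : ℝ) : ℂ)) *
      (X ^ 2 + C ((8925/676 : ℝ) : ℂ) * X + C ((445419/169000 : ℝ) : ℂ)) := by
    rw [hmap, Matrix.charpoly_map, hch]
    simp only [Polynomial.map_mul, Polynomial.map_add, Polynomial.map_pow, Polynomial.map_X,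
      Polynomial.map_C, Complex.ofRealHom_eq_coe]
  have hq1e : (X ^ 2 + C ((347/3380 : ℝ) : ℂ) * X + C ((1/1000 : ℝ) : ℂ)).eval 0 ≠ 0 := by
    simp
  have hq2e : (X ^ 2 + C ((8925/676 : ℝ) : ℂ) * X + C ((445419/169000 : ℝ) : ℂ)).eval 0 ≠ 0 := by
    simp
  have hq1 : (X ^ 2 + C ((347/3380 : ℝ) : ℂ) * X + C ((1/1000 : ℝ) : ℂ)) ≠ 0 :=
    fun h => hq1e (by rw [h]; simp)
  have hq2 : (X ^ 2 + C ((8925/676 : ℝ) : ℂ) * X + C ((445419/169000 : ℝ) : ℂ)) ≠ 0 :=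
    fun h => hq2e (by rw [h]; simp)
  have hX2 : (X : ℂ[X]) ^ 2 ≠ 0 := pow_ne_zero _ X_ne_zero
  constructor
  · rw [hmc, rootMultiplicity_mul (mul_ne_zero (mul_ne_zero hX2 hq1) hq2),
      rootMultiplicity_mul (mul_ne_zero hX2 hq1),
      rootMultiplicity_eq_zero (fun h => hq1e h),
      rootMultiplicity_eq_zero (fun h => hq2e h)]
    have : ((X : ℂ[X]) ^ 2) = (X - C 0) ^ 2 := by simp
    rw [this, rootMultiplicity_X_sub_C_pow]
  · intro z hroot hz0
    rw [hmc] at hroot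
    simp only [IsRoot, eval_mul, eval_add, eval_pow, eval_X, eval_C] at hroot
    rcases mul_eq_zero.mp hroot with h | h
    · rcases mul_eq_zero.mp h with h' | h'
      · exact absurd (pow_eq_zero_iff (n := 2) (by norm_num) |>.mp h') hz0
      · exact quad_root_neg _ _ (by norm_num) (by norm_num) (by norm_num) z h'
    · exact quad_root_neg _ _ (by norm_num) (by norm_num) (by norm_num) z h
end

section
/- Let a = 3, k = 1/20, η = 1/1000, σ = −3/2, γ₁ = −2, γ₂ = −45, and let ϑ = (kγ₁ − 2aσ)/(σ²+1)² − 1. Let J be the 6×6 real matrix with rows (ϑ, 1, −kγ₁, 0, 0, 0), (−η, kγ₂, 0, −kγ₂, 0, 0), (−kγ₁, 0, ϑ, 1, 0, 0), (0, −kγ₂, −η, kγ₂, 0, 0), (1, 0, −1, 0, 0, 0), (0, 1, 0, −1, 0, 0). Then 0 is an eigenvalue of J of algebraic multiplicity exactly 2, and every nonzero complex eigenvalue of J has strictly negative real part (Case 2 of Example I). -/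
open Polynomial

set_option maxHeartbeats 1000000 in
set_option maxRecDepth 10000 in
private lemma fdmcrn_q5 {α : Type*} (x : α) (u : Fin 5 → α) : Matrix.vecCons x u 5 = u 4 := rfl

private lemma fdmcrn_q4 {α : Type*} (x : α) (u : Fin 4 → α) : Matrix.vecCons x u 4 = u 3 := rfl
private lemma fdmcrn_q3 {α : Type*} (x : α) (u : Fin 3 → α) : Matrix.vecCons x u 3 = u 2 := rfl
private lemma fdmcrn_q2 {α : Type*} (x : α) (u : Fin 2 → α) : Matrix.vecCons x u 2 = u 1 := rfl
private lemma fdmcrn_q1 {α : Type*} (x : α) (u : Fin 1 → α) : Matrix.vecCons x u 1 = u 0 := rfl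

/-- Any root of a monic quadratic with positive real coefficients has negative real part. -/
private lemma fdmcrn_quad_neg_re (b c : ℝ) (hb : 0 < b) (hc : 0 < c) (z : ℂ)
    (h : z ^ 2 + (b : ℂ) * z + (c : ℂ) = 0) : z.re < 0 := by
  have hre := congrArg Complex.re h
  have him := congrArg Complex.im h
  simp [pow_two, Complex.add_re, Complex.add_im, Complex.mul_re, Complex.mul_im] at hre him
  have h2 : z.im * (2 * z.re + b) = 0 := by linear_combination him
  rcases mul_eq_zero.mp h2 with h3 | h3
  · rw [h3] at hre
    by_contra h4
    push_neg at h4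
    nlinarith [hre, hb, hc, h4]
  · linarith

set_option maxHeartbeats 1600000 in
/-- The characteristic polynomial of the Jacobian in Case 2 of Example I factors as
`X² (X² + (97/1690) X + 1/1000) (X² + (804/169) X + 195919/169000)`. -/
private lemma fdmcrn_charpoly (J : Matrix (Fin 6) (Fin 6) ℝ)
    (hJ : J = !![-(133/845), 1, 1/10, 0, 0, 0;
                 -(1/1000), -(9/4), 0, 9/4, 0, 0;
                 1/10, 0, -(133/845), 1, 0, 0;
                 0, 9/4, -(1/1000), -(9/4), 0, 0;
                 1, 0, -1, 0, 0, 0;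
                 0, 1, 0, -1, 0, 0]) :
    J.charpoly = X^2 * (X^2 + C (97/1690) * X + C (1/1000)) *
      (X^2 + C (804/169) * X + C (195919/169000)) := by
  apply Polynomial.funext
  intro r
  have h1 : Polynomial.eval r J.charpoly = ((Matrix.charmatrix J).map (Polynomial.evalRingHom r)).det := by
    rw [Matrix.charpoly, ← Polynomial.coe_evalRingHom, RingHom.map_det, RingHom.mapMatrix_apply]
  rw [h1]
  have h2 : (Matrix.charmatrix J).map (Polynomial.evalRingHom r) =
      !![r+133/845, -1, -(1/10), 0, 0, 0;
         1/1000, r+9/4, 0, -(9/4), 0, 0;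
         -(1/10), 0, r+133/845, -1, 0, 0;
         0, -(9/4), 1/1000, r+9/4, 0, 0;
         -1, 0, 1, 0, r, 0;
         0, -1, 0, 1, 0, r] := by
    subst hJ
    ext i j
    fin_cases i <;> fin_cases j <;>
      simp [Matrix.charmatrix_apply, Matrix.diagonal_apply, Matrix.map_apply, Matrix.vecHead,
        Matrix.vecTail, fdmcrn_q1, fdmcrn_q2, fdmcrn_q3, fdmcrn_q4, fdmcrn_q5] <;> try ring
  rw [h2]
  have hb : (!![r+133/845, -1, -(1/10), 0, 0, 0;
       1/1000, r+9/4, 0, -(9/4), 0, 0;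
       -(1/10), 0, r+133/845, -1, 0, 0;
       0, -(9/4), 1/1000, r+9/4, 0, 0;
       -1, 0, 1, 0, r, 0;
       0, -1, 0, 1, 0, r]) =
      Matrix.reindex finSumFinEquiv finSumFinEquiv
        (Matrix.fromBlocks
          !![r+133/845, -1, -(1/10), 0;
             1/1000, r+9/4, 0, -(9/4);
             -(1/10), 0, r+133/845, -1;
             0, -(9/4), 1/1000, r+9/4]
          0
          !![-1, 0, 1, 0; 0, -1, 0, 1]
          !![r, 0; 0, r]) := by
    ext i j
    fin_cases i <;> fin_cases j <;> rfl
  rw [hb, Matrix.det_reindex_self, Matrix.det_fromBlocks_zero₁₂, Matrix.det_fin_two]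
  simp (config := { decide := true }) only [Matrix.det_succ_row_zero, Fin.sum_univ_succ,
    Matrix.submatrix_apply,
    Fin.succAbove, Matrix.cons_val', Matrix.cons_val_zero, Matrix.cons_val_one,
    Matrix.head_cons, Matrix.head_fin_const, Matrix.cons_val_succ,
    Matrix.empty_val', Matrix.cons_val_fin_one, Matrix.head_val', Fin.succ, Fin.castSucc,
    Fin.castAdd, Fin.castLE, Matrix.cons_val_two, Matrix.cons_val_three, Matrix.vecHead,
    Matrix.vecTail]
  norm_num
  ring

/-- Case 2 of Example I: with `a = 3`, `k = 1/20`, `η = 1/1000`, `σ = −3/2`,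
`γ₁ = −2`, `γ₂ = −45`, the Jacobian `J` of the FDMCRN system at the line equilibrium
has `0` as an eigenvalue of algebraic multiplicity exactly `2`, and every nonzero
complex eigenvalue of `J` has strictly negative real part. -/
theorem fdmcrn_example1_case2 (a k η σ γ₁ γ₂ ϑ : ℝ)
    (ha : a = 3) (hk : k = 1 / 20) (hη : η = 1 / 1000) (hσ : σ = -(3 / 2))
    (hγ₁ : γ₁ = -2) (hγ₂ : γ₂ = -45)
    (hϑ : ϑ = (k * γ₁ - 2 * a * σ) / (σ ^ 2 + 1) ^ 2 - 1)
    (J : Matrix (Fin 6) (Fin 6) ℝ)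
    (hJ : J = !![ϑ, 1, -(k * γ₁), 0, 0, 0;
                 -η, k * γ₂, 0, -(k * γ₂), 0, 0;
                 -(k * γ₁), 0, ϑ, 1, 0, 0;
                 0, -(k * γ₂), -η, k * γ₂, 0, 0;
                 1, 0, -1, 0, 0, 0;
                 0, 1, 0, -1, 0, 0]) :
    ((J.map (Complex.ofReal)).charpoly).rootMultiplicity 0 = 2 ∧
    ∀ z : ℂ, ((J.map (Complex.ofReal)).charpoly).IsRoot z → z ≠ 0 →
      z.re < 0 := by
  have hϑ' : ϑ = -(133/845) := by rw [hϑ, hk, hγ₁, ha, hσ]; norm_num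
  have hJ' : J = !![-(133/845), 1, 1/10, 0, 0, 0;
                 -(1/1000), -(9/4), 0, 9/4, 0, 0;
                 1/10, 0, -(133/845), 1, 0, 0;
                 0, 9/4, -(1/1000), -(9/4), 0, 0;
                 1, 0, -1, 0, 0, 0;
                 0, 1, 0, -1, 0, 0] := by
    rw [hJ, hϑ', hk, hη, hγ₁, hγ₂]
    ext i j
    fin_cases i <;> fin_cases j <;>
      norm_num [Matrix.vecHead, Matrix.vecTail,
        fdmcrn_q1, fdmcrn_q2, fdmcrn_q3, fdmcrn_q4, fdmcrn_q5]
  have hcp : J.charpoly = X^2 * (X^2 + C (97/1690) * X + C (1/1000)) *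
      (X^2 + C (804/169) * X + C (195919/169000)) := fdmcrn_charpoly J hJ'
  have hmap : (J.map (Complex.ofReal)).charpoly =
      X^2 * (X^2 + C ((97/1690 : ℝ) : ℂ) * X + C ((1/1000 : ℝ) : ℂ)) *
      (X^2 + C ((804/169 : ℝ) : ℂ) * X + C ((195919/169000 : ℝ) : ℂ)) := by
    have : J.map (Complex.ofReal) = J.map Complex.ofRealHom := rfl
    rw [this, Matrix.charpoly_map, hcp]
    simp [Polynomial.map_mul, Polynomial.map_add, Polynomial.map_pow, Polynomial.map_X,
      Polynomial.map_C]
  have hq1z : ∀ z : ℂ, (X^2 + C ((97/1690 : ℝ) : ℂ) * X + C ((1/1000 : ℝ) : ℂ)).eval z =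
      z^2 + ((97/1690 : ℝ) : ℂ) * z + ((1/1000 : ℝ) : ℂ) := by intro z; simp
  have hq2z : ∀ z : ℂ, (X^2 + C ((804/169 : ℝ) : ℂ) * X + C ((195919/169000 : ℝ) : ℂ)).eval z =
      z^2 + ((804/169 : ℝ) : ℂ) * z + ((195919/169000 : ℝ) : ℂ) := by intro z; simp
  have hq1ne : (X^2 + C ((97/1690 : ℝ) : ℂ) * X + C ((1/1000 : ℝ) : ℂ)) ≠ 0 := by
    intro h
    have := congrArg (Polynomial.eval 0) h
    rw [hq1z] at this
    norm_num at this
  have hq2ne : (X^2 + C ((804/169 : ℝ) : ℂ) * X + C ((195919/169000 : ℝ) : ℂ)) ≠ 0 := by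
    intro h
    have := congrArg (Polynomial.eval 0) h
    rw [hq2z] at this
    norm_num at this
  constructor
  · rw [hmap, rootMultiplicity_mul (mul_ne_zero (mul_ne_zero (pow_ne_zero 2 X_ne_zero) hq1ne) hq2ne),
      rootMultiplicity_mul (mul_ne_zero (pow_ne_zero 2 X_ne_zero) hq1ne)]
    have h0 : rootMultiplicity (0 : ℂ) (X^2) = 2 := by
      have := Polynomial.rootMultiplicity_X_sub_C_pow (0 : ℂ) 2
      simpa using this
    rw [h0]
    have h1 : rootMultiplicity (0 : ℂ)
        (X^2 + C ((97/1690 : ℝ) : ℂ) * X + C ((1/1000 : ℝ) : ℂ)) = 0 := by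
      apply rootMultiplicity_eq_zero
      intro h
      rw [IsRoot, hq1z] at h
      norm_num at h
    have h2 : rootMultiplicity (0 : ℂ)
        (X^2 + C ((804/169 : ℝ) : ℂ) * X + C ((195919/169000 : ℝ) : ℂ)) = 0 := by
      apply rootMultiplicity_eq_zero
      intro h
      rw [IsRoot, hq2z] at h
      norm_num at h
    rw [h1, h2]
  · intro z hz hz0
    rw [hmap, IsRoot, eval_mul, eval_mul] at hz
    rcases mul_eq_zero.mp hz with h | h
    · rcases mul_eq_zero.mp h with h' | h'
      · exfalso; apply hz0; simpa using pow_eq_zero_iff (n := 2) (by norm_num) |>.mp (by simpa using h')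
      · rw [hq1z] at h'
        exact fdmcrn_quad_neg_re (97/1690) (1/1000) (by norm_num) (by norm_num) z h'
    · rw [hq2z] at h
      exact fdmcrn_quad_neg_re (804/169) (195919/169000) (by norm_num) (by norm_num) z h
end
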